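/- arXiv:1204.2866 — 4 statements merged into one kernel-verified Lean document; each statement's English description precedes it below -/
import Mathlib

section
/- Let A be a bounded operator on a complex Hilbert space H and suppose there exists T ∈ B(H) with ‖T‖ ≤ 1, TA = |A|, and T|A| = |A|T. Then A = T*|A|, and A is quasinormal (U|A| = |A|U for the partial isometry U in the polar decomposition of A). -/
open ContinuousLinearMap
open scoped InnerProduct

/-
On the closure of ran A the contraction T is isometric, since ‖T (A f)‖ = ‖|A| f‖ = ‖A f‖, and a
contraction that preserves the norm of x satisfies T* T x = x; hence A = T* T A = T* |A|.
Since T* also commutes with |A|, the operators |A| U and T* |A| agree on ran |A| (both send |A| f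
to |A| A f) and both vanish on ker |A| = (ran |A|)ᗮ, so |A| U = T* |A| = A = U |A|.
-/

namespace ContinuousLinearMap

variable {𝕜 E F G : Type*} [RCLike 𝕜]
  [NormedAddCommGroup E] [InnerProductSpace 𝕜 E] [CompleteSpace E]
  [NormedAddCommGroup F] [InnerProductSpace 𝕜 F] [CompleteSpace F]
  [NormedAddCommGroup G] [InnerProductSpace 𝕜 G] [CompleteSpace G]

theorem norm_apply_eq_of_adjoint_comp_self_eq {A : E →L[𝕜] F} {B : E →L[𝕜] G}
    (h : A† ∘L A = B† ∘L B) (x : E) : ‖A x‖ = ‖B x‖ := by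
  rw [apply_norm_eq_sqrt_inner_adjoint_left, h, ← apply_norm_eq_sqrt_inner_adjoint_left]

theorem adjoint_apply_apply_eq_of_norm_apply_eq {T : E →L[𝕜] F} (hT : ‖T‖ ≤ 1) {x : E}
    (hx : ‖T x‖ = ‖x‖) : adjoint T (T x) = x := by
  refine eq_of_norm_le_re_inner_eq_norm_sq (𝕜 := 𝕜) ?_ ?_
  · calc ‖adjoint T (T x)‖ ≤ 1 * ‖T x‖ :=
          (adjoint T).le_of_opNorm_le (by rwa [LinearIsometryEquiv.norm_map]) _
      _ = ‖x‖ := by rw [one_mul, hx]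
  · rw [adjoint_inner_left, inner_self_eq_norm_sq, hx]

theorem ext_of_comp_eq_of_eqOn_ker {B : E →L[𝕜] E} (hB : IsSelfAdjoint B) {S R : E →L[𝕜] F}
    (hran : S ∘L B = R ∘L B) (hker : ∀ x, B x = 0 → S x = R x) : S = R := by
  set D := S - R
  have hBD : B ∘L D† = 0 := by
    rw [← hB.adjoint_eq, ← adjoint_comp, sub_comp, hran, sub_self, map_zero]
  -- ran D* ⊆ ker B ⊆ ker D, so D** D* = D D* = 0
  have hDD : D†† ∘L D† = 0 := by
    rw [adjoint_adjoint]
    ext y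
    exact sub_eq_zero.2 (hker _ congr($hBD y))
  exact sub_eq_zero.1 (adjoint.map_eq_zero_iff.1 (adjoint_comp_self_eq_zero_iff.1 hDD))

end ContinuousLinearMap

theorem contraction_implies_quasinormal_general {H : Type*} [NormedAddCommGroup H]
    [InnerProductSpace ℂ H] [CompleteSpace H]
    (A T U absA : H →L[ℂ] H)
    (habs_pos : absA.IsPositive)
    (habs_sq : absA ∘L absA = ContinuousLinearMap.adjoint A ∘L A)
    (hU1 : A = U ∘L absA)
    (hU3 : ∀ h, A h = 0 → U h = 0)
    (hTnorm : ‖T‖ ≤ 1)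
    (hTA : T ∘L A = absA)
    (hcomm : T ∘L absA = absA ∘L T) :
    A = ContinuousLinearMap.adjoint T ∘L absA ∧ U ∘L absA = absA ∘L U := by
  have hsa : IsSelfAdjoint absA := habs_pos.isSelfAdjoint
  have hnorm : ∀ f, ‖absA f‖ = ‖A f‖ :=
    norm_apply_eq_of_adjoint_comp_self_eq (by rw [hsa.adjoint_eq, habs_sq])
  have hA : A = T† ∘L absA := by
    ext f
    rw [comp_apply, ← hTA, comp_apply,
      adjoint_apply_apply_eq_of_norm_apply_eq hTnorm (by rw [← comp_apply, hTA, hnorm])]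
  have hcomm' : T† ∘L absA = absA ∘L T† := by
    simpa only [adjoint_comp, hsa.adjoint_eq] using (congrArg adjoint hcomm).symm
  have hUabs : absA ∘L U = T† ∘L absA := by
    refine ext_of_comp_eq_of_eqOn_ker hsa ?_ fun x hx => ?_
    · rw [comp_assoc, ← hU1, hA, ← comp_assoc, ← hcomm', comp_assoc]
    · have hAx : A x = 0 := by rw [hU1, comp_apply, hx, map_zero]
      simp only [comp_apply, hU3 x hAx, hx, map_zero]
  exact ⟨hA, by rw [← hU1, hA, hUabs]⟩

/-- If there is a contraction `T` with `T A = |A|` and `T |A| = |A| T`, then `A = T* |A|` and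
`A` is quasinormal: `U|A| = |A|U` for the partial isometry `U` in the polar decomposition. -/
theorem contraction_implies_quasinormal {H : Type*} [NormedAddCommGroup H]
    [InnerProductSpace ℂ H] [CompleteSpace H]
    (A T U absA : H →L[ℂ] H)
    (habs_pos : absA.IsPositive)
    (habs_sq : absA ∘L absA = ContinuousLinearMap.adjoint A ∘L A)
    (hU1 : A = U ∘L absA)
    (hU2 : ∀ f, ‖U (absA f)‖ = ‖absA f‖)
    (hU3 : ∀ h, A h = 0 → U h = 0)
    (hTnorm : ‖T‖ ≤ 1)
    (hTA : T ∘L A = absA)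
    (hcomm : T ∘L absA = absA ∘L T) :
    A = ContinuousLinearMap.adjoint T ∘L absA ∧ U ∘L absA = absA ∘L U :=
  contraction_implies_quasinormal_general A T U absA habs_pos habs_sq hU1 hU3 hTnorm hTA hcomm
end

section
/- Let Sλ be a quasinormal densely defined weighted shift on a directed tree T and α > 0. Then for every u ∈ V, the vector Sλ e_u belongs to the domain of |Sλ|^α, and moreover Σ_{v∈V} ‖Sλ e_v‖^{2α} |(Sλ e_u)(v)|² = ‖Sλ e_u‖^{2(α+1)}. -/
open ContinuousLinearMap MeasureTheory

local notation "⟪" x ", " y "⟫" => @inner ℂ _ _ x y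

/-- A directed tree encoded by a parent function: `isRoot` singles out the root (if any),
`par` assigns to each non-root vertex its parent (and fixes the root); the tree is acyclic
and connected. `V° = {v | ¬ isRoot v}` and `Chi u = {v ∈ V° | par v = u}`. -/
structure DirectedTree (V : Type*) : Type _ where
  isRoot : V → Prop
  par : V → V
  root_unique : ∀ u v, isRoot u → isRoot v → u = v
  par_root : ∀ v, isRoot v → par v = v
  par_ne_self : ∀ v, ¬ isRoot v → par v ≠ v
  acyclic : ∀ (v : V) (n : ℕ), 0 < n → par^[n] v = v → isRoot v
  connected : ∀ u v : V, ∃ m n : ℕ, par^[m] u = par^[n] v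

open Classical in
/-- The formal weighted-shift action: `(Λ f)(v) = λ_v · f(par v)` for non-root `v`, `0` at
the root. The weighted shift `S_λ` is the operator `f ↦ Λ f` on the domain
`{f ∈ ℓ²(V) | Λ f ∈ ℓ²(V)}`. -/
noncomputable def shiftFun {V : Type*} (T : DirectedTree V) (lam : V → ℂ) (f : V → ℂ) :
    V → ℂ :=
  fun v => if T.isRoot v then 0 else lam v * f (T.par v)

open Classical in
/-- The basis vector `e_u` of `ℓ²(V)` as a plain function. -/
noncomputable def eVec {V : Type*} (u : V) : V → ℂ := fun v => if v = u then 1 else 0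

/-- `‖S_λ e_u‖`, given that `e_u` lies in the domain of `S_λ`. -/
noncomputable def swnorm {V : Type*} (T : DirectedTree V) (lam : V → ℂ)
    (he : ∀ u : V, Memℓp (shiftFun T lam (eVec u)) 2) (u : V) : ℝ :=
  ‖(⟨shiftFun T lam (eVec u), he u⟩ : lp (fun _ : V => ℂ) 2)‖

/-- `E` is the spectral measure of the (possibly unbounded) self-adjoint diagonal operator on
`ℓ²(V)` with diagonal `d` (together with the scalar measures `μ f = ⟨E(·)f, f⟩`). -/
structure IsDiagSpectralMeasure {V : Type*} (d : V → ℝ)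
    (E : Set ℝ → (lp (fun _ : V => ℂ) 2 →L[ℂ] lp (fun _ : V => ℂ) 2))
    (μ : lp (fun _ : V => ℂ) 2 → Measure ℝ) : Prop where
  selfadj : ∀ σ : Set ℝ, MeasurableSet σ → ContinuousLinearMap.adjoint (E σ) = E σ
  inter : ∀ σ τ : Set ℝ, MeasurableSet σ → MeasurableSet τ → E σ ∘L E τ = E (σ ∩ τ)
  univ : E Set.univ = 1
  compat : ∀ f (σ : Set ℝ), MeasurableSet σ → (μ f σ).toReal = (⟪E σ f, f⟫).re
  domIff : ∀ f : lp (fun _ : V => ℂ) 2,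
    Memℓp (fun v => (d v : ℂ) * f v) 2 ↔ Integrable (fun x => x ^ 2) (μ f)
  moment1 : ∀ (f : lp (fun _ : V => ℂ) 2) (hf : Memℓp (fun v => (d v : ℂ) * f v) 2),
    (⟪(⟨fun v => (d v : ℂ) * f v, hf⟩ : lp (fun _ : V => ℂ) 2), f⟫).re = ∫ x, x ∂(μ f)
  moment2 : ∀ (f : lp (fun _ : V => ℂ) 2) (hf : Memℓp (fun v => (d v : ℂ) * f v) 2),
    ‖(⟨fun v => (d v : ℂ) * f v, hf⟩ : lp (fun _ : V => ℂ) 2)‖ ^ 2 = ∫ x, x ^ 2 ∂(μ f)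

/-- For a quasinormal densely defined weighted shift `S_λ` on a directed tree
(quasinormality being equivalent to: `‖S_λ e_u‖ = ‖S_λ e_v‖` for every child `v` of `u`
with `λ_v ≠ 0`) and `α > 0`: `S_λ e_u` lies in the domain of `|S_λ|^α` and
`Σ_v ‖S_λ e_v‖^(2α) |(S_λ e_u)(v)|² = ‖S_λ e_u‖^(2(α+1))`. -/
theorem quasinormal_shift_range_in_domain {V : Type*} (T : DirectedTree V) (lam : V → ℂ)
    (hdense : Dense {f : lp (fun _ : V => ℂ) 2 | Memℓp (shiftFun T lam (fun v => f v)) 2})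
    (he : ∀ u : V, Memℓp (shiftFun T lam (eVec u)) 2)
    (hquasi : ∀ u v : V, ¬ T.isRoot v → T.par v = u → lam v ≠ 0 →
      swnorm T lam he u = swnorm T lam he v)
    (α : ℝ) (hα : 0 < α) (u : V) :
    Memℓp (fun v => ((swnorm T lam he v ^ α : ℝ) : ℂ) * shiftFun T lam (eVec u) v) 2 ∧
    ∑' v : V, swnorm T lam he v ^ (2 * α) * ‖shiftFun T lam (eVec u) v‖ ^ 2 =
      swnorm T lam he u ^ (2 * (α + 1)) := by
  classical
  set g := shiftFun T lam (eVec u) with hg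
  have key : ∀ v, g v ≠ 0 → swnorm T lam he v = swnorm T lam he u := by
    intro v hv
    simp only [hg, shiftFun, eVec] at hv
    by_cases hr : T.isRoot v
    · simp [hr] at hv
    · simp only [hr, if_false] at hv
      have hlam : lam v ≠ 0 := fun h => hv (by simp [h])
      have hpar : T.par v = u := by
        by_contra h
        simp [h] at hv
      exact (hquasi u v hr hpar hlam).symm
  have hnn : 0 ≤ swnorm T lam he u := norm_nonneg _
  constructor
  · have heq : (fun v => ((swnorm T lam he v ^ α : ℝ) : ℂ) * g v)
        = fun v => ((swnorm T lam he u ^ α : ℝ) : ℂ) * g v := by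
      funext v
      by_cases hv : g v = 0
      · simp [hv]
      · rw [key v hv]
    rw [heq]
    exact (he u).const_mul _
  · have hpt : ∀ v, swnorm T lam he v ^ (2 * α) * ‖g v‖ ^ 2
        = swnorm T lam he u ^ (2 * α) * ‖g v‖ ^ 2 := by
      intro v
      by_cases hv : g v = 0
      · simp [hv]
      · rw [key v hv]
    have hnorm : ∑' v, ‖g v‖ ^ 2 = swnorm T lam he u ^ (2 : ℝ) := by
      have h2 : (0:ℝ) < (2 : ENNReal).toReal := by norm_num
      have := (lp.norm_rpow_eq_tsum (p := 2) h2 (⟨g, he u⟩ : lp (fun _ : V => ℂ) 2)).symm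
      simp only [ENNReal.toReal_ofNat] at this
      calc ∑' v, ‖g v‖ ^ 2 = ∑' v, ‖g v‖ ^ (2:ℝ) := by
            refine tsum_congr fun v => ?_
            rw [Real.rpow_two]
        _ = swnorm T lam he u ^ (2:ℝ) := this
    calc ∑' v, swnorm T lam he v ^ (2 * α) * ‖g v‖ ^ 2
        = ∑' v, swnorm T lam he u ^ (2 * α) * ‖g v‖ ^ 2 := tsum_congr hpt
      _ = swnorm T lam he u ^ (2 * α) * ∑' v, ‖g v‖ ^ 2 := tsum_mul_left
      _ = swnorm T lam he u ^ (2 * α) * swnorm T lam he u ^ (2 : ℝ) := by rw [hnorm]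
      _ = swnorm T lam he u ^ (2 * α + 2) := by
            rw [← Real.rpow_add' hnn (by nlinarith)]
      _ = swnorm T lam he u ^ (2 * (α + 1)) := by
            rw [show (2:ℝ) * (α + 1) = 2 * α + 2 from by ring]
end

section
/- Let Sλ be a densely defined weighted shift on a directed tree T with weights λ, and c ∈ ℝ₊. Then ⟨E(σ)|Sλ|f, |Sλ|f⟩ ≤ c⟨E(σ)Sλ f, Sλ f⟩ holds for all Borel σ ⊆ ℝ₊ and all f ∈ dom(Sλ) (where E is the spectral measure of |Sλ|) if and only if for every u ∈ V: ‖Sλ e_u‖² ≤ c · Σ_{v ∈ Chi(u), ‖Sλ e_v‖ = ‖Sλ e_u‖} |λ_v|². -/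
open ContinuousLinearMap MeasureTheory

local notation "⟪" x ", " y "⟫" => @inner ℂ _ _ x y

/-!
The axioms of `IsDiagSpectralMeasure` determine `E`: for a basis vector `e_u` the measure
`μ e_u` is a probability measure with mean `d u` and second moment `d u ^ 2`, so its variance
vanishes and it is the Dirac mass at `d u`. Hence `E σ e_u = χ_σ(d u) e_u`, and by
self-adjointness `E σ` is the coordinate projection onto `d ⁻¹' σ`. Both sides of the
inequality thus become vertex sums, `∑ᵥ χ_σ(d v) d v² |f v|²` and
`∑_w χ_σ(d w) |λ_w|² |f (par w)|²`; grouping the second by parents (every non-root vertex is a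
child of exactly one vertex) reduces the inequality to the vertexwise condition. Testing on
`σ = {d u}` and `f = e_u` recovers that condition; this needs one instance of `E`, namely the
coordinate projections together with the atomic measures `∑ᵥ |f v|² δ_{d v}`.
-/

open scoped lp ENNReal

noncomputable section

theorem summable_iff_tsum_ofReal_ne_top {α : Type*} {w : α → ℝ} (hw : ∀ i, 0 ≤ w i) :
    Summable w ↔ ∑' i, ENNReal.ofReal (w i) ≠ ∞ :=
  ⟨Summable.tsum_ofReal_ne_top, fun h => by
    simpa [ENNReal.toReal_ofReal (hw _)] using ENNReal.summable_toReal h⟩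

theorem toReal_tsum_ofReal {α : Type*} {w : α → ℝ} (hw : ∀ i, 0 ≤ w i) :
    (∑' i, ENNReal.ofReal (w i)).toReal = ∑' i, w i := by
  simp [ENNReal.tsum_toReal_eq, ENNReal.toReal_ofReal (hw _)]

theorem ofReal_tsum_le_tsum_ofReal {α : Type*} {w : α → ℝ} (hw : ∀ i, 0 ≤ w i) :
    ENNReal.ofReal (∑' i, w i) ≤ ∑' i, ENNReal.ofReal (w i) :=
  toReal_tsum_ofReal hw ▸ ENNReal.ofReal_toReal_le

namespace lp

variable {α : Type*}

section NormedGroup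

variable {E : Type*} [NormedAddCommGroup E]

theorem norm_sq_eq_tsum_norm_sq (f : ℓ²(α, E)) : ‖f‖ ^ 2 = ∑' i, ‖f i‖ ^ 2 := by
  simpa using norm_rpow_eq_tsum (p := 2) (by norm_num) f

theorem summable_norm_sq (f : ℓ²(α, E)) : Summable fun i => ‖f i‖ ^ 2 := by
  simpa using (lp.memℓp f).summable (p := 2) (by norm_num)

end NormedGroup

theorem _root_.memℓp_two_iff_summable_norm_sq {E : Type*} [NormedAddCommGroup E] {f : α → E} :
    Memℓp f 2 ↔ Summable fun i => ‖f i‖ ^ 2 := by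
  simpa using memℓp_gen_iff (p := 2) (f := f) (by norm_num)

variable (𝕜 : Type*) {E : Type*} [RCLike 𝕜] [NormedAddCommGroup E] [InnerProductSpace 𝕜 E]

def indicatorCLM (s : Set α) : ℓ²(α, E) →L[𝕜] ℓ²(α, E) :=
  LinearMap.mkContinuous
    { toFun := fun f => ⟨s.indicator f, (lp.memℓp f).mono' (norm_indicator_le_norm_self f)⟩
      map_add' := fun f g => lp.ext (Set.indicator_add' s f g)
      map_smul' := fun c f => lp.ext (Set.indicator_const_smul s c f) }
    1 fun f => (one_mul ‖f‖).symm ▸ lp.norm_mono two_ne_zero (norm_indicator_le_norm_self f)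

variable {𝕜}

@[simp]
theorem coe_indicatorCLM (s : Set α) (f : ℓ²(α, E)) :
    ⇑(indicatorCLM 𝕜 s f) = s.indicator f := rfl

theorem adjoint_indicatorCLM [CompleteSpace E] (s : Set α) :
    adjoint (indicatorCLM 𝕜 s (E := E)) = indicatorCLM 𝕜 s := by
  refine ((eq_adjoint_iff _ _).mpr fun f g => ?_).symm
  simp only [inner_eq_tsum, coe_indicatorCLM]
  exact tsum_congr fun i => by by_cases hi : i ∈ s <;> simp [hi]

theorem indicatorCLM_comp (s t : Set α) :
    indicatorCLM 𝕜 s ∘L indicatorCLM 𝕜 t = indicatorCLM 𝕜 (s ∩ t) (E := E) :=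
  ContinuousLinearMap.ext fun f => lp.ext (Set.indicator_indicator s t f)

theorem indicatorCLM_univ : indicatorCLM 𝕜 Set.univ = (1 : ℓ²(α, E) →L[𝕜] ℓ²(α, E)) :=
  ContinuousLinearMap.ext fun f => lp.ext (Set.indicator_univ f)

theorem re_inner_indicatorCLM_self (s : Set α) (f : ℓ²(α, E)) :
    RCLike.re (inner 𝕜 (indicatorCLM 𝕜 s f) f) = ∑' i, s.indicator (fun i => ‖f i‖ ^ 2) i := by
  rw [inner_eq_tsum, RCLike.re_tsum 𝕜 (summable_inner _ f)]
  refine tsum_congr fun i => ?_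
  by_cases hi : i ∈ s <;> simp [hi]

end lp
namespace lp

variable {α E : Type*} [NormedAddCommGroup E]

def diagMeasure (d : α → ℝ) (f : ℓ²(α, E)) : Measure ℝ :=
  Measure.sum fun i => ENNReal.ofReal (‖f i‖ ^ 2) • Measure.dirac (d i)

variable (d : α → ℝ) (f : ℓ²(α, E))

theorem lintegral_diagMeasure {g : ℝ → ℝ≥0∞} (hg : Measurable g) :
    ∫⁻ x, g x ∂diagMeasure d f = ∑' i, ENNReal.ofReal (‖f i‖ ^ 2) * g (d i) := by
  simp [diagMeasure, lintegral_sum_measure, lintegral_dirac' _ hg]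

theorem toReal_diagMeasure_apply {σ : Set ℝ} (hσ : MeasurableSet σ) :
    (diagMeasure d f σ).toReal = ∑' i, (d ⁻¹' σ).indicator (fun i => ‖f i‖ ^ 2) i := by
  have hw : ∀ i, 0 ≤ (d ⁻¹' σ).indicator (fun i => ‖f i‖ ^ 2) i :=
    fun i => Set.indicator_nonneg (fun _ _ => sq_nonneg _) i
  rw [← toReal_tsum_ofReal hw, diagMeasure, Measure.sum_apply _ hσ]
  congr 1
  refine tsum_congr fun i => ?_
  by_cases hi : d i ∈ σ <;> simp [hi, Measure.dirac_apply' _ hσ]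

theorem ae_nonneg_diagMeasure {d : α → ℝ} (hd : ∀ i, 0 ≤ d i) :
    ∀ᵐ x ∂diagMeasure d f, 0 ≤ x := by
  rw [diagMeasure, Measure.ae_sum_iff' measurableSet_Ici]
  exact fun i => Measure.ae_smul_measure ((ae_dirac_iff measurableSet_Ici).mpr (hd i)) _

theorem integral_diagMeasure {d : α → ℝ} (hd : ∀ i, 0 ≤ d i) {g : ℝ → ℝ} (hg : Measurable g)
    (hg0 : ∀ x, 0 ≤ x → 0 ≤ g x) :
    ∫ x, g x ∂diagMeasure d f = ∑' i, ‖f i‖ ^ 2 * g (d i) := by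
  rw [integral_eq_lintegral_of_nonneg_ae ((ae_nonneg_diagMeasure f hd).mono hg0)
      hg.aestronglyMeasurable, lintegral_diagMeasure d f hg.ennreal_ofReal]
  simp_rw [← ENNReal.ofReal_mul (sq_nonneg _)]
  exact toReal_tsum_ofReal fun i => mul_nonneg (sq_nonneg _) (hg0 _ (hd i))

theorem integrable_diagMeasure_iff {g : ℝ → ℝ} (hg : Measurable g) (hg0 : ∀ x, 0 ≤ g x) :
    Integrable g (diagMeasure d f) ↔ Summable fun i => ‖f i‖ ^ 2 * g (d i) := by
  rw [← lintegral_ofReal_ne_top_iff_integrable hg.aestronglyMeasurable (.of_forall hg0),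
    lintegral_diagMeasure d f hg.ennreal_ofReal,
    summable_iff_tsum_ofReal_ne_top fun i => mul_nonneg (sq_nonneg _) (hg0 _)]
  simp_rw [ENNReal.ofReal_mul (sq_nonneg _)]

end lp

theorem isDiagSpectralMeasure_indicatorCLM {V : Type*} {d : V → ℝ} (hd : ∀ v, 0 ≤ d v) :
    IsDiagSpectralMeasure d (fun σ => lp.indicatorCLM ℂ (d ⁻¹' σ)) (lp.diagMeasure d) where
  selfadj σ _ := lp.adjoint_indicatorCLM _
  inter σ τ _ _ := lp.indicatorCLM_comp _ _
  univ := lp.indicatorCLM_univ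
  compat f σ hσ := by
    rw [lp.toReal_diagMeasure_apply d f hσ, ← lp.re_inner_indicatorCLM_self (𝕜 := ℂ)]
    rfl
  domIff f := by
    rw [memℓp_two_iff_summable_norm_sq,
      lp.integrable_diagMeasure_iff d f (g := fun x => x ^ 2) (by fun_prop) sq_nonneg]
    simp [mul_pow, mul_comm]
  moment1 f _ := by
    rw [lp.integral_diagMeasure f hd (g := fun x => x) measurable_id' fun _ hx => hx,
      lp.inner_eq_tsum, Complex.re_tsum (lp.summable_inner _ f)]
    refine tsum_congr fun v => ?_
    simp [Complex.sq_norm, Complex.normSq_apply]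
    ring
  moment2 f _ := by
    rw [lp.integral_diagMeasure f hd (g := fun x => x ^ 2) (by fun_prop) fun x _ => sq_nonneg x,
      lp.norm_sq_eq_tsum_norm_sq]
    simp [mul_pow, mul_comm]

theorem MeasureTheory.eq_dirac_integral_of_integral_sq {ν : Measure ℝ} [IsProbabilityMeasure ν]
    (hν : Integrable (fun x => x ^ 2) ν) (h : ∫ x, x ^ 2 ∂ν = (∫ x, x ∂ν) ^ 2) :
    ν = Measure.dirac (∫ x, x ∂ν) := by
  have hX : MemLp (fun x : ℝ => x) 2 ν :=
    (memLp_two_iff_integrable_sq measurable_id'.aestronglyMeasurable).mpr hν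
  have hvar : ProbabilityTheory.variance (fun x => x) ν = 0 := by
    rw [ProbabilityTheory.variance_eq_sub hX]
    exact sub_eq_zero.mpr h
  have hae : ∀ᵐ x ∂ν, x ∈ ({∫ x, x ∂ν} : Set ℝ) :=
    ProbabilityTheory.ae_eq_integral_of_variance_eq_zero hX hvar
  have hmass : ν {∫ x, x ∂ν} = 1 :=
    (prob_compl_eq_zero_iff (measurableSet_singleton _)).mp (ae_iff.mp hae)
  calc ν = ν.restrict {∫ x, x ∂ν} := (Measure.restrict_eq_self_of_ae_mem hae).symm
    _ = Measure.dirac (∫ x, x ∂ν) := by rw [Measure.restrict_singleton, hmass, one_smul]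

theorem lp.ofReal_mul_single_one {V : Type*} [DecidableEq V] (d : V → ℝ) (u : V) :
    (fun v => (d v : ℂ) * (lp.single 2 u 1 : ℓ²(V, ℂ)) v) = ⇑(lp.single 2 u (d u : ℂ)) := by
  funext v
  by_cases hv : v = u <;> simp [hv]

namespace IsDiagSpectralMeasure

variable {V : Type*} {d : V → ℝ} {E : Set ℝ → (ℓ²(V, ℂ) →L[ℂ] ℓ²(V, ℂ))}
  {μ : ℓ²(V, ℂ) → Measure ℝ}

theorem norm_sq_apply (hE : IsDiagSpectralMeasure d E μ) {σ : Set ℝ} (hσ : MeasurableSet σ)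
    (x : ℓ²(V, ℂ)) : ‖E σ x‖ ^ 2 = (⟪E σ x, x⟫).re := by
  rw [← hE.selfadj σ hσ, @norm_sq_eq_re_inner ℂ, ← adjoint_inner_left, adjoint_adjoint,
    ← comp_apply, hE.selfadj σ hσ, hE.inter σ σ hσ hσ, Set.inter_self]
  rfl

theorem measure_single [DecidableEq V] (hE : IsDiagSpectralMeasure d E μ) (u : V) :
    μ (lp.single 2 u 1) = Measure.dirac (d u) := by
  set e : ℓ²(V, ℂ) := lp.single 2 u 1
  have hde : (fun v => (d v : ℂ) * e v) = ⇑(lp.single 2 u (d u : ℂ)) := lp.ofReal_mul_single_one d u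
  have hmem : Memℓp (fun v => (d v : ℂ) * e v) 2 := hde ▸ lp.memℓp _
  have hde' : (⟨_, hmem⟩ : ℓ²(V, ℂ)) = lp.single 2 u (d u : ℂ) := lp.ext hde
  have : IsProbabilityMeasure (μ e) := by
    refine ⟨(ENNReal.toReal_eq_one_iff _).mp ?_⟩
    rw [hE.compat e _ MeasurableSet.univ, hE.univ, one_apply_eq_self]
    simp [e, lp.norm_single two_pos]
  have hmean : ∫ x, x ∂μ e = d u := by
    rw [← hE.moment1 e hmem, hde', lp.inner_single_left]
    simp [e]
  have hsq : ∫ x, x ^ 2 ∂μ e = d u ^ 2 := by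
    rw [← hE.moment2 e hmem, hde', lp.norm_single two_pos, Complex.norm_real, Real.norm_eq_abs,
      sq_abs]
  have hdirac := eq_dirac_integral_of_integral_sq ((hE.domIff e).mp hmem) (by rw [hsq, hmean])
  rwa [hmean] at hdirac

open Classical in
theorem apply_single [DecidableEq V] (hE : IsDiagSpectralMeasure d E μ) {σ : Set ℝ}
    (hσ : MeasurableSet σ) (u : V) :
    E σ (lp.single 2 u 1) = if d u ∈ σ then lp.single 2 u 1 else 0 := by
  set e : ℓ²(V, ℂ) := lp.single 2 u 1
  have he : ‖e‖ = 1 := by simp [e, lp.norm_single two_pos]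
  have hre : (⟪E σ e, e⟫).re = if d u ∈ σ then 1 else 0 := by
    rw [← hE.compat e σ hσ, hE.measure_single u, Measure.dirac_apply' _ hσ]
    by_cases hu : d u ∈ σ <;> simp [hu]
  split_ifs with hu <;> simp only [hu, if_true, if_false] at hre
  · have h : ‖E σ e - e‖ ^ 2 = 0 := by
      rw [norm_sub_sq (𝕜 := ℂ), hE.norm_sq_apply hσ, he]
      change _ - 2 * (⟪E σ e, e⟫).re + _ = _
      rw [hre]
      norm_num
    simpa [sub_eq_zero] using h
  · have h : ‖E σ e‖ ^ 2 = 0 := by rw [hE.norm_sq_apply hσ, hre]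
    simpa using h

theorem apply_eq_indicatorCLM (hE : IsDiagSpectralMeasure d E μ) {σ : Set ℝ}
    (hσ : MeasurableSet σ) : E σ = lp.indicatorCLM ℂ (d ⁻¹' σ) := by
  classical
  refine ContinuousLinearMap.ext fun g => lp.ext (funext fun u => ?_)
  have hcoord : ∀ h : ℓ²(V, ℂ), h u = ⟪lp.single 2 u 1, h⟫ := fun h => by
    simp [lp.inner_single_left]
  rw [hcoord, ← adjoint_inner_left, hE.selfadj σ hσ, hE.apply_single hσ, lp.coe_indicatorCLM]
  by_cases hu : d u ∈ σ <;> simp [hu, lp.inner_single_left]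

theorem re_inner_apply_self (hE : IsDiagSpectralMeasure d E μ) {σ : Set ℝ}
    (hσ : MeasurableSet σ) (g : ℓ²(V, ℂ)) :
    (⟪E σ g, g⟫).re = ∑' v, (d ⁻¹' σ).indicator (fun v => ‖g v‖ ^ 2) v := by
  rw [hE.apply_eq_indicatorCLM hσ]
  exact lp.re_inner_indicatorCLM_self (𝕜 := ℂ) _ g

end IsDiagSpectralMeasure

theorem eVec_eq_single {V : Type*} [DecidableEq V] (u : V) : eVec u = ⇑(lp.single 2 u (1 : ℂ)) := by
  funext v
  by_cases hv : v = u <;> simp [eVec, hv]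

theorem tsum_indicator_ofReal_mul_eVec {V : Type*} (d : V → ℝ) (u : V) :
    ∑' v, (d ⁻¹' {d u}).indicator (fun v => ‖(d v : ℂ) * eVec u v‖ ^ 2) v = d u ^ 2 := by
  rw [tsum_eq_single u fun v hv => by simp [eVec, hv]]
  simp [eVec]

section WeightedShift

open Classical

variable {V : Type*} {T : DirectedTree V} {lam : V → ℂ}

theorem shiftFun_eVec (u w : V) :
    shiftFun T lam (eVec u) w = if ¬T.isRoot w ∧ T.par w = u then lam w else 0 := by
  by_cases hw : T.isRoot w <;> by_cases hu : T.par w = u <;> simp [shiftFun, eVec, hw, hu]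

theorem tsum_indicator_shiftFun_eVec (d : V → ℝ) (u : V) :
    ∑' w, (d ⁻¹' {d u}).indicator (fun w => ‖shiftFun T lam (eVec u) w‖ ^ 2) w =
      ∑' w, if ¬T.isRoot w ∧ T.par w = u ∧ d w = d u then ‖lam w‖ ^ 2 else 0 := by
  refine tsum_congr fun w => ?_
  by_cases hw : ¬T.isRoot w ∧ T.par w = u ∧ d w = d u
  · simp [hw, shiftFun_eVec]
  · rw [if_neg hw, Set.indicator_apply_eq_zero]
    intro hdw
    simp only [shiftFun_eVec, Set.mem_preimage, Set.mem_singleton_iff] at hdw ⊢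
    simp [if_neg fun h : ¬T.isRoot w ∧ T.par w = u => hw ⟨h.1, h.2, hdw⟩]

theorem shiftFun_of_not_isRoot (f : V → ℂ) {w : V} (hw : ¬T.isRoot w) :
    shiftFun T lam f w = lam w * f (T.par w) := if_neg hw

variable {d : V → ℝ} {c : ℝ}

theorem ofReal_indicator_le_tsum_children (hc : 0 ≤ c)
    (hd : ∀ u, d u ^ 2 ≤
      c * ∑' v, if ¬T.isRoot v ∧ T.par v = u ∧ d v = d u then ‖lam v‖ ^ 2 else 0)
    (σ : Set ℝ) (f : V → ℂ) (u : V) :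
    ENNReal.ofReal ((d ⁻¹' σ).indicator (fun v => ‖(d v : ℂ) * f v‖ ^ 2) u) ≤
      ENNReal.ofReal c * ∑' w, ENNReal.ofReal
        (if T.par w = u then (d ⁻¹' σ).indicator (fun w => ‖shiftFun T lam f w‖ ^ 2) w else 0) := by
  by_cases hu : d u ∈ σ
  swap
  · simp [hu]
  set g : V → ℝ := fun v => if ¬T.isRoot v ∧ T.par v = u ∧ d v = d u then ‖lam v‖ ^ 2 else 0
  have hg : ∀ v, 0 ≤ g v * ‖f u‖ ^ 2 := fun v => by positivity
  have hchild : ∀ w, g w * ‖f u‖ ^ 2 ≤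
      if T.par w = u then (d ⁻¹' σ).indicator (fun w => ‖shiftFun T lam f w‖ ^ 2) w else 0 := by
    intro w
    by_cases hw : ¬T.isRoot w ∧ T.par w = u ∧ d w = d u
    · obtain ⟨hroot, rfl, hdw⟩ := hw
      have hσw : w ∈ d ⁻¹' σ := by simpa [Set.mem_preimage, hdw] using hu
      simp [g, hroot, hdw, hσw, shiftFun_of_not_isRoot, mul_pow]
    · simp only [g, if_neg hw, zero_mul]
      split_ifs
      exacts [Set.indicator_nonneg (fun _ _ => sq_nonneg _) _, le_rfl]
  calc ENNReal.ofReal ((d ⁻¹' σ).indicator (fun v => ‖(d v : ℂ) * f v‖ ^ 2) u)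
      ≤ ENNReal.ofReal (c * ∑' w, g w * ‖f u‖ ^ 2) := by
        refine ENNReal.ofReal_le_ofReal ?_
        rw [Set.indicator_of_mem (show u ∈ d ⁻¹' σ from hu), tsum_mul_right, norm_mul,
          Complex.norm_real, Real.norm_eq_abs, mul_pow, sq_abs, ← mul_assoc]
        exact mul_le_mul_of_nonneg_right (hd u) (sq_nonneg _)
    _ ≤ ENNReal.ofReal c * ∑' w, ENNReal.ofReal (g w * ‖f u‖ ^ 2) := by
        rw [ENNReal.ofReal_mul hc]
        gcongr
        exact ofReal_tsum_le_tsum_ofReal hg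
    _ ≤ _ := by
        gcongr with w
        exact hchild w

theorem tsum_indicator_le_mul_tsum_indicator (hc : 0 ≤ c)
    (hd : ∀ u, d u ^ 2 ≤
      c * ∑' v, if ¬T.isRoot v ∧ T.par v = u ∧ d v = d u then ‖lam v‖ ^ 2 else 0)
    (σ : Set ℝ) {f : V → ℂ} (hf : Summable fun w => ‖shiftFun T lam f w‖ ^ 2) :
    ∑' v, (d ⁻¹' σ).indicator (fun v => ‖(d v : ℂ) * f v‖ ^ 2) v ≤
      c * ∑' w, (d ⁻¹' σ).indicator (fun w => ‖shiftFun T lam f w‖ ^ 2) w := by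
  set a := fun v => (d ⁻¹' σ).indicator (fun v => ‖(d v : ℂ) * f v‖ ^ 2) v
  set b := fun w => (d ⁻¹' σ).indicator (fun w => ‖shiftFun T lam f w‖ ^ 2) w
  have ha : ∀ v, 0 ≤ a v := Set.indicator_nonneg fun _ _ => sq_nonneg _
  have hb : ∀ w, 0 ≤ b w := Set.indicator_nonneg fun _ _ => sq_nonneg _
  have hbsum : Summable b :=
    hf.of_nonneg_of_le hb (Set.indicator_le_self' fun _ _ => sq_nonneg _)
  have hfiber : ∀ w, ∑' u, ENNReal.ofReal (if T.par w = u then b w else 0) = ENNReal.ofReal (b w) :=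
    fun w => by simp_rw [apply_ite ENNReal.ofReal, ENNReal.ofReal_zero]; exact tsum_ite_eq' _ _
  have key : ∑' u, ENNReal.ofReal (a u) ≤ ENNReal.ofReal (c * ∑' w, b w) :=
    calc ∑' u, ENNReal.ofReal (a u)
        ≤ ∑' u, ENNReal.ofReal c * ∑' w, ENNReal.ofReal (if T.par w = u then b w else 0) :=
          ENNReal.tsum_le_tsum (ofReal_indicator_le_tsum_children hc hd σ f)
      _ = ENNReal.ofReal c * ∑' w, ENNReal.ofReal (b w) := by
          rw [ENNReal.tsum_mul_left, ENNReal.tsum_comm]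
          simp_rw [hfiber]
      _ = _ := by rw [ENNReal.ofReal_mul hc, ENNReal.ofReal_tsum_of_nonneg hb hbsum]
  rw [← toReal_tsum_ofReal ha]
  exact ENNReal.toReal_le_of_le_ofReal (mul_nonneg hc (tsum_nonneg hb)) key

end WeightedShift

open Classical in
theorem weighted_shift_weakly_quasinormal_iff_general {V : Type*} (T : DirectedTree V)
    (lam : V → ℂ)
    (he : ∀ u : V, Memℓp (shiftFun T lam (eVec u)) 2)
    (c : ℝ) (hc : 0 ≤ c) :
    (∀ (E : Set ℝ → (lp (fun _ : V => ℂ) 2 →L[ℂ] lp (fun _ : V => ℂ) 2))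
        (μ : lp (fun _ : V => ℂ) 2 → Measure ℝ),
      IsDiagSpectralMeasure (swnorm T lam he) E μ →
      ∀ (σ : Set ℝ), MeasurableSet σ →
        ∀ (f : lp (fun _ : V => ℂ) 2) (hf : Memℓp (shiftFun T lam (fun v => f v)) 2)
          (hf' : Memℓp (fun v => ((swnorm T lam he v : ℝ) : ℂ) * f v) 2),
          (⟪E σ (⟨fun v => ((swnorm T lam he v : ℝ) : ℂ) * f v, hf'⟩ :
              lp (fun _ : V => ℂ) 2),
            (⟨fun v => ((swnorm T lam he v : ℝ) : ℂ) * f v, hf'⟩ :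
              lp (fun _ : V => ℂ) 2)⟫).re ≤
          c * (⟪E σ (⟨shiftFun T lam (fun v => f v), hf⟩ : lp (fun _ : V => ℂ) 2),
            (⟨shiftFun T lam (fun v => f v), hf⟩ : lp (fun _ : V => ℂ) 2)⟫).re) ↔
    (∀ u : V, swnorm T lam he u ^ 2 ≤
      c * ∑' v : V, if ¬ T.isRoot v ∧ T.par v = u ∧ swnorm T lam he v = swnorm T lam he u
        then ‖lam v‖ ^ 2 else 0) := by
  set d := swnorm T lam he
  have hd : ∀ v, 0 ≤ d v := fun v => norm_nonneg _
  constructor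
  · intro h u
    have hf : Memℓp (shiftFun T lam ⇑(lp.single 2 u (1 : ℂ))) 2 := eVec_eq_single u ▸ he u
    have hf' : Memℓp (fun v => (d v : ℂ) * (lp.single 2 u 1 : ℓ²(V, ℂ)) v) 2 :=
      (lp.ofReal_mul_single_one d u).symm ▸ lp.memℓp _
    have H := h _ _ (isDiagSpectralMeasure_indicatorCLM hd) {d u} (measurableSet_singleton _)
      (lp.single 2 u 1) hf hf'
    simpa only [← RCLike.re_to_complex, lp.re_inner_indicatorCLM_self,
      ← eVec_eq_single, tsum_indicator_ofReal_mul_eVec, tsum_indicator_shiftFun_eVec] using H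
  · intro hpt E μ hE σ hσ f hf hf'
    rw [hE.re_inner_apply_self hσ, hE.re_inner_apply_self hσ]
    exact tsum_indicator_le_mul_tsum_indicator hc hpt σ (memℓp_two_iff_summable_norm_sq.mp hf)

open Classical in
/-- Weak quasinormality of a densely defined weighted shift on a directed tree: the
inequality `⟨E(σ)|S_λ|f, |S_λ|f⟩ ≤ c ⟨E(σ)S_λ f, S_λ f⟩` holds for all Borel `σ` and all
`f` in the domain of `S_λ` (where `E` is the spectral measure of `|S_λ|`) iff
`‖S_λ e_u‖² ≤ c · Σ_{v ∈ Chi(u), ‖S_λ e_v‖ = ‖S_λ e_u‖} |λ_v|²` for every `u`. -/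
theorem weighted_shift_weakly_quasinormal_iff {V : Type*} (T : DirectedTree V)
    (lam : V → ℂ)
    (hdense : Dense {f : lp (fun _ : V => ℂ) 2 | Memℓp (shiftFun T lam (fun v => f v)) 2})
    (he : ∀ u : V, Memℓp (shiftFun T lam (eVec u)) 2)
    (c : ℝ) (hc : 0 ≤ c) :
    (∀ (E : Set ℝ → (lp (fun _ : V => ℂ) 2 →L[ℂ] lp (fun _ : V => ℂ) 2))
        (μ : lp (fun _ : V => ℂ) 2 → Measure ℝ),
      IsDiagSpectralMeasure (swnorm T lam he) E μ →
      ∀ (σ : Set ℝ), MeasurableSet σ →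
        ∀ (f : lp (fun _ : V => ℂ) 2) (hf : Memℓp (shiftFun T lam (fun v => f v)) 2)
          (hf' : Memℓp (fun v => ((swnorm T lam he v : ℝ) : ℂ) * f v) 2),
          (⟪E σ (⟨fun v => ((swnorm T lam he v : ℝ) : ℂ) * f v, hf'⟩ :
              lp (fun _ : V => ℂ) 2),
            (⟨fun v => ((swnorm T lam he v : ℝ) : ℂ) * f v, hf'⟩ :
              lp (fun _ : V => ℂ) 2)⟫).re ≤
          c * (⟪E σ (⟨shiftFun T lam (fun v => f v), hf⟩ : lp (fun _ : V => ℂ) 2),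
            (⟨shiftFun T lam (fun v => f v), hf⟩ : lp (fun _ : V => ℂ) 2)⟫).re) ↔
    (∀ u : V, swnorm T lam he u ^ 2 ≤
      c * ∑' v : V, if ¬ T.isRoot v ∧ T.par v = u ∧ swnorm T lam he v = swnorm T lam he u
        then ‖lam v‖ ^ 2 else 0) :=
  weighted_shift_weakly_quasinormal_iff_general T lam he c hc
end
end

section
/- (Quasinormality characterized by c = 1.) Let A be a bounded nonzero operator on a complex Hilbert space H and E the spectral measure of |A|. Then A is quasinormal if and only if ⟨E(σ)|A|f, |A|f⟩ ≤ ⟨E(σ)Af, Af⟩ for all Borel sets σ ⊆ ℝ₊ and all f ∈ H. -/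
open ContinuousLinearMap MeasureTheory

local notation "⟪" x ", " y "⟫" => @inner ℂ _ _ x y

/-- `E` is the spectral measure of the (bounded, positive) operator `D`, together with the
associated family of scalar Borel measures `μ f = ⟨E(·)f, f⟩`. -/
structure IsSpectralMeasure {H : Type*} [NormedAddCommGroup H] [InnerProductSpace ℂ H]
    [CompleteSpace H] (D : H →L[ℂ] H) (E : Set ℝ → H →L[ℂ] H)
    (μ : H → Measure ℝ) : Prop where
  selfadj : ∀ σ : Set ℝ, MeasurableSet σ → ContinuousLinearMap.adjoint (E σ) = E σ
  inter : ∀ σ τ : Set ℝ, MeasurableSet σ → MeasurableSet τ → E σ ∘L E τ = E (σ ∩ τ)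
  univ : E Set.univ = 1
  support_nonneg : E (Set.Iio 0) = 0
  compat : ∀ (f : H) (σ : Set ℝ), MeasurableSet σ → (μ f σ).toReal = (⟪E σ f, f⟫).re
  finite : ∀ f, IsFiniteMeasure (μ f)
  moment_int : ∀ f, Integrable (fun x => x ^ 2) (μ f)
  moment1 : ∀ f : H, (⟪D f, f⟫).re = ∫ x, x ∂(μ f)
  moment2 : ∀ f : H, ‖D f‖ ^ 2 = ∫ x, x ^ 2 ∂(μ f)

/-!
Write `P = E(σ)` and `M = A*A = |A|²`. The form `⟨|A|x, y⟩` is recovered from the scalar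
measures of `E` by polarization and integration, so `P` commutes with `|A|` and `|A|P|A| = PM`.
In a C*-algebra a projection `P` commuting with `A*A` commutes with `A` iff `A*PA = PM`, since
`(PA - AP)*(PA - AP) = A*PA - (A*PA)P - P(A*PA) + PMP`. The inequality of the statement says
`|A|P|A| ≤ A*PA` in the Loewner order; as `E(σ) + E(σᶜ) = 1`, the inequalities for `σ` and `σᶜ`
add up to `M ≤ M`, so both are equalities.
-/

theorem IsStarProjection.commute_iff_star_mul_mul_eq {R : Type*} [NonUnitalNormedRing R]
    [StarRing R] [CStarRing R] {p a : R} (hp : IsStarProjection p)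
    (hpa : Commute p (star a * a)) :
    Commute p a ↔ star a * p * a = p * (star a * a) := by
  refine ⟨fun h => by rw [mul_assoc, h.eq, ← mul_assoc, hpa.eq], fun h => ?_⟩
  suffices star (p * a - a * p) * (p * a - a * p) = 0 from
    sub_eq_zero.mp (CStarRing.star_mul_self_eq_zero_iff _ |>.mp this)
  calc star (p * a - a * p) * (p * a - a * p)
      = star a * (p * p) * a - star a * p * a * p - p * (star a * p * a)
          + p * (star a * a) * p := by
        simp only [star_sub, star_mul, hp.isSelfAdjoint.star_eq]; noncomm_ring
    _ = 0 := by
        rw [hp.isIdempotentElem.eq, h]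
        simp only [← mul_assoc, hp.isIdempotentElem.eq]
        abel

section Operators

variable {H : Type*} [NormedAddCommGroup H] [InnerProductSpace ℂ H] [CompleteSpace H]

theorem ContinuousLinearMap.le_iff_forall_re_inner_map_self_le {S T : H →L[ℂ] H}
    (hS : IsSelfAdjoint S) (hT : IsSelfAdjoint T) :
    S ≤ T ↔ ∀ x, (⟪S x, x⟫).re ≤ (⟪T x, x⟫).re := by
  simp only [le_def, isPositive_def', hT.sub hS, true_and, reApplyInnerSelf_apply, sub_apply,
    inner_sub_left, map_sub, sub_nonneg, RCLike.re_to_complex]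

theorem IsSelfAdjoint.inner_left_eq_inner_right {T : H →L[ℂ] H} (hT : IsSelfAdjoint T)
    (x y : H) :
    ⟪T x, y⟫ = ⟪x, T y⟫ :=
  hT.isSymmetric x y

theorem IsSelfAdjoint.re_inner_map_polarization {T : H →L[ℂ] H} (hT : IsSelfAdjoint T)
    (x y : H) :
    4 * (⟪T x, y⟫).re = (⟪T (x + y), x + y⟫).re - (⟪T (x - y), x - y⟫).re := by
  have hyx : (⟪T y, x⟫).re = (⟪T x, y⟫).re := by
    rw [hT.inner_left_eq_inner_right]
    exact inner_re_symm (𝕜 := ℂ) _ _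
  simp only [map_add, map_sub, inner_add_left, inner_add_right, inner_sub_left,
    inner_sub_right, Complex.add_re, Complex.sub_re, hyx]
  ring

end Operators

namespace IsSpectralMeasure

variable {H : Type*} [NormedAddCommGroup H] [InnerProductSpace ℂ H] [CompleteSpace H]
  {D : H →L[ℂ] H} {E : Set ℝ → H →L[ℂ] H} {μ : H → Measure ℝ}

theorem isSelfAdjoint (hE : IsSpectralMeasure D E μ) {σ : Set ℝ} (hσ : MeasurableSet σ) :
    IsSelfAdjoint (E σ) :=
  hE.selfadj σ hσ

theorem isStarProjection (hE : IsSpectralMeasure D E μ) {σ : Set ℝ} (hσ : MeasurableSet σ) :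
    IsStarProjection (E σ) :=
  ⟨(hE.inter σ σ hσ hσ).trans (by rw [Set.inter_self]), hE.isSelfAdjoint hσ⟩

theorem apply_comm (hE : IsSpectralMeasure D E μ) {σ τ : Set ℝ} (hσ : MeasurableSet σ)
    (hτ : MeasurableSet τ) (f : H) : E σ (E τ f) = E τ (E σ f) := by
  rw [← comp_apply, hE.inter σ τ hσ hτ, Set.inter_comm, ← hE.inter τ σ hτ hσ, comp_apply]

theorem inner_apply_self (hE : IsSpectralMeasure D E μ) {σ : Set ℝ} (hσ : MeasurableSet σ)
    (f : H) : ⟪E σ f, f⟫ = ((μ f σ).toReal : ℂ) := by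
  rw [hE.compat f σ hσ]
  exact ((hE.isSelfAdjoint hσ).isSymmetric.coe_reApplyInnerSelf_apply f).symm

theorem add_compl (hE : IsSpectralMeasure D E μ) {σ : Set ℝ} (hσ : MeasurableSet σ) :
    E σ + E σᶜ = 1 := by
  have := hE.finite
  refine coe_injective ((ext_inner_map _ _).mp fun f => ?_)
  change ⟪(E σ + E σᶜ) f, f⟫ = ⟪(1 : H →L[ℂ] H) f, f⟫
  rw [add_apply, inner_add_left,
    hE.inner_apply_self hσ, hE.inner_apply_self hσ.compl, ← Complex.ofReal_add,
    ← ENNReal.toReal_add (measure_ne_top _ _) (measure_ne_top _ _), measure_add_measure_compl hσ,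
    ← hE.inner_apply_self MeasurableSet.univ, hE.univ]

theorem integrable_id (hE : IsSpectralMeasure D E μ) (f : H) : Integrable (fun x => x) (μ f) :=
  have := hE.finite f
  ((memLp_two_iff_integrable_sq aestronglyMeasurable_id).mpr (hE.moment_int f)).integrable
    one_le_two

theorem re_inner_map_self_add_eq (hE : IsSpectralMeasure D E μ) {u v u' v' : H}
    (h : ∀ τ, MeasurableSet τ → (⟪E τ u, u⟫).re + (⟪E τ v, v⟫).re
      = (⟪E τ u', u'⟫).re + (⟪E τ v', v'⟫).re) :
    (⟪D u, u⟫).re + (⟪D v, v⟫).re = (⟪D u', u'⟫).re + (⟪D v', v'⟫).re := by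
  have := hE.finite
  have hμ : μ u + μ v = μ u' + μ v' := by
    ext τ hτ
    rw [Measure.add_apply, Measure.add_apply,
      ← ENNReal.toReal_eq_toReal_iff' (by finiteness) (by finiteness),
      ENNReal.toReal_add (measure_ne_top _ _) (measure_ne_top _ _),
      ENNReal.toReal_add (measure_ne_top _ _) (measure_ne_top _ _),
      hE.compat u τ hτ, hE.compat v τ hτ, hE.compat u' τ hτ, hE.compat v' τ hτ]
    exact h τ hτ
  rw [hE.moment1, hE.moment1, hE.moment1, hE.moment1,
    ← integral_add_measure (hE.integrable_id u) (hE.integrable_id v),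
    ← integral_add_measure (hE.integrable_id u') (hE.integrable_id v'), hμ]

theorem re_inner_map_eq_of_forall (hE : IsSpectralMeasure D E μ) (hD : IsSelfAdjoint D)
    {x y x' y' : H}
    (h : ∀ τ, MeasurableSet τ → (⟪E τ x, y⟫).re = (⟪E τ x', y'⟫).re) :
    (⟪D x, y⟫).re = (⟪D x', y'⟫).re := by
  have hsum := hE.re_inner_map_self_add_eq (u := x + y) (v := x' - y') (u' := x' + y')
    (v' := x - y) fun τ hτ => by
      linarith [h τ hτ, (hE.isSelfAdjoint hτ).re_inner_map_polarization x y,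
        (hE.isSelfAdjoint hτ).re_inner_map_polarization x' y']
  linarith [hD.re_inner_map_polarization x y, hD.re_inner_map_polarization x' y']

theorem inner_map_eq_of_forall (hE : IsSpectralMeasure D E μ) (hD : IsSelfAdjoint D)
    {x y x' y' : H}
    (h : ∀ τ, MeasurableSet τ → ⟪E τ x, y⟫ = ⟪E τ x', y'⟫) :
    ⟪D x, y⟫ = ⟪D x', y'⟫ := by
  apply Complex.ext
  · exact hE.re_inner_map_eq_of_forall hD fun τ hτ => congrArg Complex.re (h τ hτ)
  · have hI := hE.re_inner_map_eq_of_forall hD (y := Complex.I • y) (y' := Complex.I • y')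
      fun τ hτ => by rw [inner_smul_right, inner_smul_right, h τ hτ]
    simpa only [inner_smul_right, Complex.I_mul_re, neg_inj] using hI

theorem commute (hE : IsSpectralMeasure D E μ) (hD : IsSelfAdjoint D) {σ : Set ℝ}
    (hσ : MeasurableSet σ) : Commute (E σ) D := by
  ext f
  refine ext_inner_right ℂ fun g => ?_
  rw [mul_apply_eq_comp, mul_apply_eq_comp, (hE.isSelfAdjoint hσ).inner_left_eq_inner_right,
    hE.inner_map_eq_of_forall hD fun τ hτ => ?_]
  rw [← hE.apply_comm hσ hτ, (hE.isSelfAdjoint hσ).inner_left_eq_inner_right]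

end IsSpectralMeasure

theorem quasinormal_iff_ineq_c_one_general {H : Type*} [NormedAddCommGroup H]
    [InnerProductSpace ℂ H] [CompleteSpace H]
    (A absA : H →L[ℂ] H)
    (habs_pos : absA.IsPositive)
    (habs_sq : absA ∘L absA = ContinuousLinearMap.adjoint A ∘L A)
    (E : Set ℝ → H →L[ℂ] H) (μ : H → Measure ℝ)
    (hE : IsSpectralMeasure absA E μ) :
    (∀ σ : Set ℝ, MeasurableSet σ → E σ ∘L A = A ∘L E σ) ↔
      (∀ (σ : Set ℝ), MeasurableSet σ → ∀ f : H,
        (⟪E σ (absA f), absA f⟫).re ≤ (⟪E σ (A f), A f⟫).re) := by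
  have hB : IsSelfAdjoint absA := habs_pos.isSelfAdjoint
  have hM : absA * absA = star A * A := by rw [star_eq_adjoint]; exact habs_sq
  have hPM (σ) (hσ : MeasurableSet σ) : Commute (E σ) (star A * A) :=
    hM ▸ (hE.commute hB hσ).mul_right (hE.commute hB hσ)
  have hPB (σ) (hσ : MeasurableSet σ) : absA * E σ * absA = E σ * (star A * A) := by
    rw [← (hE.commute hB hσ).eq, mul_assoc, hM]
  calc (∀ σ : Set ℝ, MeasurableSet σ → E σ ∘L A = A ∘L E σ)
      ↔ ∀ σ : Set ℝ, MeasurableSet σ → star A * E σ * A = absA * E σ * absA :=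
        forall₂_congr fun σ hσ => by
          rw [hPB σ hσ]; exact (hE.isStarProjection hσ).commute_iff_star_mul_mul_eq (hPM σ hσ)
    _ ↔ ∀ σ : Set ℝ, MeasurableSet σ → absA * E σ * absA ≤ star A * E σ * A := by
        refine ⟨fun h σ hσ => (h σ hσ).ge, fun h σ hσ => ?_⟩
        refine ((add_eq_add_iff_eq_and_eq (h σ hσ) (h σᶜ hσ.compl)).mp ?_).1.symm
        rw [← add_mul, ← mul_add, ← add_mul, ← mul_add, hE.add_compl hσ, mul_one, mul_one, hM]
    _ ↔ _ := forall₂_congr fun σ hσ => by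
        have hBPB := (hE.isSelfAdjoint hσ).conjugate' absA
        rw [hB.star_eq] at hBPB
        rw [le_iff_forall_re_inner_map_self_le hBPB ((hE.isSelfAdjoint hσ).conjugate' A)]
        simp only [mul_apply_eq_comp, hB.inner_left_eq_inner_right, star_eq_adjoint,
          adjoint_inner_left]

/-- A nonzero bounded operator `A` is quasinormal (commutes with the spectral measure `E`
of `|A|`) if and only if `⟨E(σ)|A|f, |A|f⟩ ≤ ⟨E(σ)Af, Af⟩` for all Borel `σ` and `f`. -/
theorem quasinormal_iff_ineq_c_one {H : Type*} [NormedAddCommGroup H]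
    [InnerProductSpace ℂ H] [CompleteSpace H]
    (A absA : H →L[ℂ] H) (hA : A ≠ 0)
    (habs_pos : absA.IsPositive)
    (habs_sq : absA ∘L absA = ContinuousLinearMap.adjoint A ∘L A)
    (E : Set ℝ → H →L[ℂ] H) (μ : H → Measure ℝ)
    (hE : IsSpectralMeasure absA E μ) :
    (∀ σ : Set ℝ, MeasurableSet σ → E σ ∘L A = A ∘L E σ) ↔
      (∀ (σ : Set ℝ), MeasurableSet σ → ∀ f : H,
        (⟪E σ (absA f), absA f⟫).re ≤ (⟪E σ (A f), A f⟫).re) :=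
  quasinormal_iff_ineq_c_one_general A absA habs_pos habs_sq E μ hE
end
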